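/- Let (σ_ℓ)_{ℓ≥1} be a GPAS variance sequence with gate parameters (α_ℓ) and scaling factors β_ℓ = 1 − SiLU(α_ℓ) > 0, let A ≥ 0, B ≥ 0, and define S_ℓ := ∑_{k=1}^{ℓ−1} ( 1/(σ_k + 1) + log β_k ). Then for every natural number L ≥ 1, the layerwise gradient-norm product satisfies ∏_{ℓ=1}^{L−1} ( 1 + A/σ_ℓ + B/σ_ℓ² ) ≤ exp( ∑_{ℓ=1}^{L−1} [ (A/σ_1)·exp(−S_ℓ/2) + (B/σ_1²)·exp(−S_ℓ) ] ). -/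

import Mathlib

noncomputable def SiLU (x : ℝ) : ℝ := x / (1 + Real.exp (-x))

/-!
The variance recursion multiplies `σ_ℓ²` by `(1 + 1/σ_ℓ) β_ℓ ≥ exp (1/(σ_ℓ + 1) + log β_ℓ)`, so
`σ_ℓ² ≥ σ_1² exp S_ℓ`, i.e. `σ_ℓ ≥ σ_1 exp (S_ℓ/2)`. Bounding each `A/σ_ℓ + B/σ_ℓ²` accordingly and
using `∏ (1 + a_ℓ) ≤ exp (∑ a_ℓ)` gives the estimate.
-/

open Real Finset

lemma exp_one_div_add_one_le_one_add_one_div {x : ℝ} (hx : 0 < x) :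
    exp (1 / (x + 1)) ≤ 1 + 1 / x := by
  have hpos : 0 < 1 + 1 / x := by positivity
  rw [← le_log_iff_exp_le hpos]
  convert one_sub_inv_le_log_of_pos hpos using 1
  field_simp
  ring

lemma mul_exp_sum_range_le {u c : ℕ → ℝ} (h : ∀ n, u n * exp (c n) ≤ u (n + 1)) (n : ℕ) :
    u 0 * exp (∑ k ∈ range n, c k) ≤ u n := by
  induction n with
  | zero => simp
  | succ n ih =>
    calc u 0 * exp (∑ k ∈ range (n + 1), c k) = u 0 * exp (∑ k ∈ range n, c k) * exp (c n) := by
          rw [sum_range_succ, exp_add, mul_assoc]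
      _ ≤ u n * exp (c n) := by gcongr
      _ ≤ u (n + 1) := h n

lemma sq_mul_exp_le_sq_mul_one_add_one_div_mul {s β : ℝ} (hs : 0 < s) (hβ : 0 < β) :
    s ^ 2 * exp (1 / (s + 1) + log β) ≤ s ^ 2 * (1 + 1 / s) * β := by
  rw [exp_add, exp_log hβ, ← mul_assoc]
  gcongr
  exact exp_one_div_add_one_le_one_add_one_div hs

lemma gpas_mul_exp_half_sum_le {σ β : ℕ → ℝ} (hσ : ∀ ℓ, 0 < σ ℓ) (hβ : ∀ ℓ, 0 < β ℓ)
    (hrec : ∀ ℓ, σ (ℓ + 1) ^ 2 = σ ℓ ^ 2 * (1 + 1 / σ ℓ) * β ℓ) (ℓ : ℕ) :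
    σ 0 * exp ((∑ k ∈ range ℓ, (1 / (σ k + 1) + log (β k))) / 2) ≤ σ ℓ := by
  set S := ∑ k ∈ range ℓ, (1 / (σ k + 1) + log (β k))
  have hsq : σ 0 ^ 2 * exp S ≤ σ ℓ ^ 2 :=
    mul_exp_sum_range_le (fun n ↦ (sq_mul_exp_le_sq_mul_one_add_one_div_mul (hσ n) (hβ n)).trans_eq
      (hrec n).symm) ℓ
  have h0 := hσ 0
  rwa [← pow_le_pow_iff_left₀ (by positivity) (hσ ℓ).le two_ne_zero, mul_pow, sq (exp _),
    ← exp_add, add_halves]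

-- Indices are shifted by one: `σ 0` is `σ_1`, and `range (L - 1)` runs over `ℓ = 1, …, L - 1`.
theorem gpas_gradient_norm_product_bound_general
    (σ α : ℕ → ℝ)
    (hσ : ∀ ℓ, 0 < σ ℓ)
    (hβ : ∀ ℓ, 0 < 1 - SiLU (α ℓ))
    (hrec : ∀ ℓ, (σ (ℓ + 1)) ^ 2 = (σ ℓ) ^ 2 * (1 + 1 / σ ℓ) * (1 - SiLU (α ℓ)))
    (A B : ℝ) (hA : 0 ≤ A) (hB : 0 ≤ B)
    (S : ℕ → ℝ)
    (hS : ∀ ℓ, S ℓ = ∑ k ∈ Finset.range ℓ,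
      (1 / (σ k + 1) + Real.log (1 - SiLU (α k))))
    (L : ℕ) :
    ∏ ℓ ∈ Finset.range (L - 1), (1 + A / σ ℓ + B / (σ ℓ) ^ 2) ≤
      Real.exp (∑ ℓ ∈ Finset.range (L - 1),
        ((A / σ 0) * Real.exp (-(S ℓ) / 2) + (B / (σ 0) ^ 2) * Real.exp (-(S ℓ)))) := by
  have hterm (ℓ : ℕ) : A / σ ℓ + B / σ ℓ ^ 2 ≤
      A / σ 0 * exp (-S ℓ / 2) + B / σ 0 ^ 2 * exp (-S ℓ) := by
    have hlower : σ 0 * exp (S ℓ / 2) ≤ σ ℓ := hS ℓ ▸ gpas_mul_exp_half_sum_le hσ hβ hrec ℓ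
    have h0 := hσ 0
    calc A / σ ℓ + B / σ ℓ ^ 2 ≤ A / (σ 0 * exp (S ℓ / 2)) + B / (σ 0 * exp (S ℓ / 2)) ^ 2 := by
          gcongr
      _ = A / σ 0 * exp (-S ℓ / 2) + B / σ 0 ^ 2 * exp (-S ℓ) := by
          rw [neg_div, exp_neg, exp_neg, mul_pow, sq (exp _), ← exp_add, add_halves]
          ring
  calc ∏ ℓ ∈ range (L - 1), (1 + A / σ ℓ + B / σ ℓ ^ 2)
      = ∏ ℓ ∈ range (L - 1), (1 + (A / σ ℓ + B / σ ℓ ^ 2)) := by simp only [add_assoc]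
    _ ≤ exp (∑ ℓ ∈ range (L - 1), (A / σ ℓ + B / σ ℓ ^ 2)) :=
        prod_one_add_le_exp_sum _ fun ℓ ↦ by have := hσ ℓ; positivity
    _ ≤ _ := exp_le_exp.2 (sum_le_sum fun ℓ _ ↦ hterm ℓ)

/-- For a GPAS variance sequence `σ` (here `σ 0 = σ_1`, indices shifted by
one so the product/sum over `ℓ = 1, …, L−1` becomes a product/sum over `Finset.range (L−1)`),
with `S_ℓ = ∑_{k=1}^{ℓ−1} (1/(σ_k + 1) + log β_k)`, the layerwise gradient-norm product
satisfies `∏_{ℓ=1}^{L−1} (1 + A/σ_ℓ + B/σ_ℓ²) ≤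
exp(∑_{ℓ=1}^{L−1} ((A/σ_1) e^{−S_ℓ/2} + (B/σ_1²) e^{−S_ℓ}))`. -/
theorem gpas_gradient_norm_product_bound
    (σ α : ℕ → ℝ)
    (hσ : ∀ ℓ, 0 < σ ℓ)
    (hβ : ∀ ℓ, 0 < 1 - SiLU (α ℓ))
    (hrec : ∀ ℓ, (σ (ℓ + 1)) ^ 2 = (σ ℓ) ^ 2 * (1 + 1 / σ ℓ) * (1 - SiLU (α ℓ)))
    (A B : ℝ) (hA : 0 ≤ A) (hB : 0 ≤ B)
    (S : ℕ → ℝ)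
    (hS : ∀ ℓ, S ℓ = ∑ k ∈ Finset.range ℓ,
      (1 / (σ k + 1) + Real.log (1 - SiLU (α k))))
    (L : ℕ) (hL : 1 ≤ L) :
    ∏ ℓ ∈ Finset.range (L - 1), (1 + A / σ ℓ + B / (σ ℓ) ^ 2) ≤
      Real.exp (∑ ℓ ∈ Finset.range (L - 1),
        ((A / σ 0) * Real.exp (-(S ℓ) / 2) + (B / (σ 0) ^ 2) * Real.exp (-(S ℓ)))) :=
  gpas_gradient_norm_product_bound_general σ α hσ hβ hrec A B hA hB S hS L
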